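/- arXiv:1403.2175 — 4 statements merged into one kernel-verified Lean document; each statement's English description precedes it below -/
import Mathlib

section
/- Let p be a prime, m a positive integer, and X, t formal variables (or elements of a field where the series converge). Then the sum over reduced upper-triangular m×m matrices W with entries in Z_p (equivalently, over representatives of GL_m(Z_p)\M_m(Z_p)^× ) of (tXp^{-m})^{ord_p(det W)} equals ∏_{i=1}^{m} (1 - tX p^{i-1-m})^{-1}. -/
/-!
A reduced matrix is determined by its diagonal exponents `e` together with, in column `j`, the
`j` entries above the diagonal, each a digit below `p ^ e j`; its determinant has valuation
`∑ e j`. Hence the number of reduced matrices with `ord_p (det W) = n` is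
`∑_{∑ e = n} ∏_j (p ^ j) ^ e j`, the coefficient of `t ^ n` in `∏_{j < m} (1 - p ^ j t)⁻¹`.
The identity is this product formula after the substitution `t ↦ t X p ^ (-m)`, which is
`PowerSeries.rescale`.
-/

/-- A reduced matrix over `ℤ_p`: upper triangular, diagonal entries powers of `p`,
and the entry in position `(i,j)` (for `i < j`) a natural number `< p^(e j)`. -/
def IsReducedMat {p : ℕ} [Fact p.Prime] {m : ℕ}
    (W : Matrix (Fin m) (Fin m) ℤ_[p]) : Prop :=
  ∃ e : Fin m → ℕ,
    (∀ i, W i i = (p : ℤ_[p]) ^ e i) ∧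
    (∀ i j : Fin m, (j : ℕ) < (i : ℕ) → W i j = 0) ∧
    (∀ i j : Fin m, (i : ℕ) < (j : ℕ) → ∃ d : ℕ, d < p ^ e j ∧ W i j = (d : ℤ_[p]))


open PowerSeries Finset

theorem PowerSeries.mk_pow_mul_one_sub_C_mul_X {R : Type*} [CommRing R] (r : R) :
    mk (fun n => r ^ n) * (1 - C r * X) = 1 := by
  simpa [rescale_mk] using congrArg (rescale r) (mk_one_mul_one_sub_eq_one R)

theorem PowerSeries.rescale_C {R : Type*} [CommSemiring R] (a c : R) :
    rescale a (C c) = C c := by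
  ext n
  rcases n with _ | n <;> simp [coeff_C]

theorem Matrix.det_eq_pow_sum_of_upperTriangular {R : Type*} [CommRing R] {m : ℕ}
    {W : Matrix (Fin m) (Fin m) R} (x : R) (e : Fin m → ℕ) (hdiag : ∀ i, W i i = x ^ e i)
    (hlow : ∀ i j : Fin m, (j : ℕ) < i → W i j = 0) :
    W.det = x ^ ∑ i, e i := by
  rw [Matrix.det_of_isUpperTriangular hlow, Finset.prod_congr rfl fun i _ => hdiag i,
    Finset.prod_pow_eq_pow_sum]

abbrev ReducedDigits (p : ℕ) {m : ℕ} (e : Fin m →₀ ℕ) : Type :=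
  ∀ j : Fin m, Fin j → Fin (p ^ e j)

section ReducedMat

variable {p m : ℕ} [Fact p.Prime]

noncomputable def reducedMatOf (x : Σ e : Fin m →₀ ℕ, ReducedDigits p e) :
    Matrix (Fin m) (Fin m) ℤ_[p] := fun i j =>
  if h : (i : ℕ) < j then ((x.2 j ⟨i, h⟩ : ℕ) : ℤ_[p])
  else if i = j then (p : ℤ_[p]) ^ x.1 i else 0

variable (x : Σ e : Fin m →₀ ℕ, ReducedDigits p e)

theorem reducedMatOf_of_lt {i j : Fin m} (h : (i : ℕ) < j) :
    reducedMatOf x i j = ((x.2 j ⟨i, h⟩ : ℕ) : ℤ_[p]) :=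
  dif_pos h

theorem reducedMatOf_self (i : Fin m) : reducedMatOf x i i = (p : ℤ_[p]) ^ x.1 i := by
  simp [reducedMatOf]

theorem reducedMatOf_of_gt {i j : Fin m} (h : (j : ℕ) < i) : reducedMatOf x i j = 0 := by
  have hne : i ≠ j := fun hij => by subst hij; omega
  simp [reducedMatOf, hne, h.not_gt]

theorem isReducedMat_reducedMatOf : IsReducedMat (reducedMatOf x) :=
  ⟨x.1, reducedMatOf_self x, fun _ _ h => reducedMatOf_of_gt x h,
    fun i j h => ⟨x.2 j ⟨i, h⟩, (x.2 j ⟨i, h⟩).2, reducedMatOf_of_lt x h⟩⟩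

theorem valuation_det_reducedMatOf : (reducedMatOf x).det.valuation = ∑ i, x.1 i := by
  rw [Matrix.det_eq_pow_sum_of_upperTriangular _ _ (reducedMatOf_self x)
    fun _ _ h => reducedMatOf_of_gt x h, PadicInt.valuation_pow, PadicInt.valuation_p, mul_one]

theorem reducedMatOf_injective :
    Function.Injective (reducedMatOf : (Σ e : Fin m →₀ ℕ, ReducedDigits p e) → _) := by
  rintro ⟨e, d⟩ ⟨e', d'⟩ hW
  obtain rfl : e = e' := by
    ext i
    simpa [reducedMatOf_self] using congrArg (fun W => (W i i).valuation) hW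
  congr
  funext j k
  have hk : (k : ℕ) < j := k.2
  have := congrFun (congrFun hW ⟨k, k.2.trans j.2⟩) j
  rw [reducedMatOf_of_lt _ hk, reducedMatOf_of_lt _ hk] at this
  exact Fin.ext (by exact_mod_cast this)

theorem IsReducedMat.exists_reducedMatOf_eq {W : Matrix (Fin m) (Fin m) ℤ_[p]}
    (hW : IsReducedMat W) : ∃ x : Σ e : Fin m →₀ ℕ, ReducedDigits p e, reducedMatOf x = W := by
  obtain ⟨e, hdiag, hlow, hup⟩ := hW
  choose d hd hWd using hup
  refine ⟨⟨Finsupp.equivFunOnFinite.symm e, fun j k =>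
    ⟨d ⟨k, k.2.trans j.2⟩ j k.2, hd _ _ k.2⟩⟩, ?_⟩
  ext i j
  rcases lt_trichotomy (i : ℕ) j with h | h | h
  · rw [reducedMatOf_of_lt _ h, hWd]
  · obtain rfl := Fin.ext h
    rw [reducedMatOf_self, hdiag]
    rfl
  · rw [reducedMatOf_of_gt _ h, hlow i j h]

noncomputable def reducedMatEquiv :
    (Σ e : Fin m →₀ ℕ, ReducedDigits p e) ≃
      {W : Matrix (Fin m) (Fin m) ℤ_[p] // IsReducedMat W} :=
  Equiv.ofBijective (fun x => ⟨reducedMatOf x, isReducedMat_reducedMatOf x⟩)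
    ⟨fun _ _ h => reducedMatOf_injective (congrArg Subtype.val h),
      fun W => (W.2.exists_reducedMatOf_eq).imp fun _ h => Subtype.ext h⟩

end ReducedMat

theorem card_reducedMat_valuation_det_eq (p : ℕ) [Fact p.Prime] (m n : ℕ) :
    Nat.card {W : Matrix (Fin m) (Fin m) ℤ_[p] //
        IsReducedMat W ∧ (W.det).valuation = (n : ℤ)}
      = ∑ e ∈ finsuppAntidiag univ n, ∏ j : Fin m, (p ^ (j : ℕ)) ^ e j := by
  classical
  let fiber : {x : Σ e : Fin m →₀ ℕ, ReducedDigits p e // x.1 ∈ finsuppAntidiag univ n} ≃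
      {W : Matrix (Fin m) (Fin m) ℤ_[p] // IsReducedMat W ∧ (W.det).valuation = (n : ℤ)} :=
    (reducedMatEquiv.subtypeEquiv fun x => by
        change _ ↔ ((reducedMatOf x).det.valuation : ℤ) = n
        rw [valuation_det_reducedMatOf, Nat.cast_inj, mem_finsuppAntidiag]
        simp).trans
      (Equiv.subtypeSubtypeEquivSubtypeInter _ _)
  rw [Nat.card_congr (fiber.symm.trans (Equiv.subtypeSigmaEquiv _ _)), Nat.card_eq_fintype_card,
    Fintype.card_sigma, ← sum_coe_sort (finsuppAntidiag univ n)]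
  refine sum_congr rfl fun e _ => ?_
  simp [Fintype.card_pi, ← pow_mul, mul_comm]

theorem mk_card_reducedMat_mul_prod_one_sub (R : Type*) [CommRing R] (p : ℕ) [Fact p.Prime]
    (m : ℕ) :
    mk (fun n : ℕ => (Nat.card {W : Matrix (Fin m) (Fin m) ℤ_[p] //
        IsReducedMat W ∧ (W.det).valuation = (n : ℤ)} : R)) *
      ∏ j : Fin m, (1 - C ((p : R) ^ (j : ℕ)) * X) = 1 := by
  classical
  have hgen : mk (fun n : ℕ => (Nat.card {W : Matrix (Fin m) (Fin m) ℤ_[p] //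
        IsReducedMat W ∧ (W.det).valuation = (n : ℤ)} : R)) =
      ∏ j : Fin m, mk fun k => ((p : R) ^ (j : ℕ)) ^ k := by
    ext n
    rw [coeff_mk, card_reducedMat_valuation_det_eq, coeff_prod]
    simp
  rw [hgen, ← prod_mul_distrib]
  exact prod_eq_one fun j _ => mk_pow_mul_one_sub_C_mul_X _

theorem stmt3_general (p : ℕ) [Fact p.Prime] (m : ℕ) :
    (PowerSeries.mk fun n : ℕ =>
        (Nat.card {W : Matrix (Fin m) (Fin m) ℤ_[p] //
            IsReducedMat W ∧ (W.det).valuation = (n : ℤ)} : RatFunc ℚ) *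
          (RatFunc.X * (p : RatFunc ℚ) ^ (-(m : ℤ))) ^ n) *
      ∏ i ∈ Finset.Icc 1 m,
        (1 - PowerSeries.C (R := RatFunc ℚ)
              (RatFunc.X * (p : RatFunc ℚ) ^ ((i : ℤ) - 1 - m)) * PowerSeries.X) = 1 := by
  set a : RatFunc ℚ := RatFunc.X * (p : RatFunc ℚ) ^ (-(m : ℤ))
  have hp : (p : RatFunc ℚ) ≠ 0 := Nat.cast_ne_zero.mpr (Fact.out : p.Prime).ne_zero
  have hfactor : ∀ j : Fin m,
      1 - C (RatFunc.X * (p : RatFunc ℚ) ^ (((1 + j : ℕ) : ℤ) - 1 - m)) * X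
        = rescale a (1 - C ((p : RatFunc ℚ) ^ (j : ℕ)) * X) := by
    intro j
    rw [map_sub, map_one, map_mul (rescale a), rescale_C, rescale_X, ← mul_assoc, ← map_mul,
      show ((1 + j : ℕ) : ℤ) - 1 - m = j + -m by push_cast; ring, zpow_add₀ hp, zpow_natCast]
    congr 3
    ring
  rw [← Ico_add_one_right_eq_Icc, prod_Ico_eq_prod_range, Nat.add_sub_cancel,
    ← Fin.prod_univ_eq_prod_range, prod_congr rfl fun j _ => hfactor j, ← map_prod]
  simp_rw [mul_comm _ (a ^ _), ← rescale_mk, ← map_mul, mk_card_reducedMat_mul_prod_one_sub,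
    map_one]

/-- The formal power series identity
`∑_W (t X p^{-m})^{ord_p (det W)} = ∏_{i=1}^m (1 - t X p^{i-1-m})^{-1}`,
where `W` runs over reduced `m × m` matrices over `ℤ_p` (a complete set of
representatives of `GL_m(ℤ_p)\M_m(ℤ_p)^×`), stated as a power series in `t`
over the rational function field `ℚ(X)`: the coefficient of `t^n` on the left
is `(#{reduced W : ord_p(det W) = n}) · (X p^{-m})^n`. -/
theorem stmt3 (p : ℕ) [Fact p.Prime] (m : ℕ) (hm : 1 ≤ m) :
    (PowerSeries.mk fun n : ℕ =>
        (Nat.card {W : Matrix (Fin m) (Fin m) ℤ_[p] //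
            IsReducedMat W ∧ (W.det).valuation = (n : ℤ)} : RatFunc ℚ) *
          (RatFunc.X * (p : RatFunc ℚ) ^ (-(m : ℤ))) ^ n) *
      ∏ i ∈ Finset.Icc 1 m,
        (1 - PowerSeries.C (R := RatFunc ℚ)
              (RatFunc.X * (p : RatFunc ℚ) ^ ((i : ℤ) - 1 - m)) * PowerSeries.X) = 1 :=
  stmt3_general p m
end

section
/- Let K_p = Q_p ⊕ Q_p (the split case) with O_p = Z_p ⊕ Z_p, and let l ≥ m ≥ 1. Then the local density α_p(1_l, 1_m) equals ∏_{i=0}^{m-1} (1 − p^{−l+i}). -/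
/-!
Let `R` be a finite local ring, `q = #R` and `s = #(nonunits R)`, and let `N(l, m)` count the
pairs `(X, Y)` of `l × m` matrices with `Yᵀ X = 1`. Splitting off the last column, such a pair is a
pair of vectors `(x, y)` with `y ⬝ x = 1` together with a pair `(X', Y')` with `Y'ᵀ X' = 1`,
`yᵀ X' = 0` and `Y'ᵀ x = 0`. In a local ring `y ⬝ x = 1` forces some `y i` to be a unit, so there is
an invertible `P` with `P x = e` and `yᵀ P⁻¹ = eᵀ` for a fixed basis vector `e`; the action
`(X', Y') ↦ (P X', P⁻ᵀ Y')` carries the admissible `(X', Y')` onto the pairs vanishing in the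
row of `e`, that is, onto the solutions of size `(l - 1) × (m - 1)`. Counting the `y` with a unit
entry and then the solutions `x` of `y ⬝ x = 1` gives
`N(l + 1, m + 1) = (q ^ (l + 1) - s ^ (l + 1)) q ^ l N(l, m)`.
For `R = ℤ/p^a` with `a ≥ 1` we have `q = p ^ a` and `s = p ^ (a - 1)`, so the normalised count
`p ^ (a (m² - 2lm)) N(l, m)` already equals `∏ (1 - p ^ (i - l))`.
-/

open Matrix Filter

lemma card_nonunits_add_card_units (M : Type*) [Monoid M] [Finite M] :
    Nat.card (nonunits M) + Nat.card Mˣ = Nat.card M := by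
  have h : nonunits M = (Set.range ((↑) : Mˣ → M))ᶜ := rfl
  rw [h, ← Nat.card_range_of_injective Units.val_injective, Nat.card_coe_set_eq,
    Nat.card_coe_set_eq, Set.ncard_compl_add_ncard]

lemma card_exists_isUnit_add_card_nonunits_pow (M : Type*) [Monoid M] [Finite M] (n : Type*)
    [Fintype n] :
    Nat.card {y : n → M // ∃ i, IsUnit (y i)} + Nat.card (nonunits M) ^ Fintype.card n =
      Nat.card M ^ Fintype.card n := by
  have hcompl :
      Nat.card {y : n → M // ¬ ∃ i, IsUnit (y i)} = Nat.card (nonunits M) ^ Fintype.card n := by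
    rw [← Nat.card_eq_fintype_card, ← Nat.card_fun]
    exact Nat.card_congr ((Equiv.subtypeEquivRight fun y => not_exists).trans
      (Equiv.subtypePiEquivPi (p := fun _ z => ¬ IsUnit z)))
  have := Fintype.ofFinite M
  classical
  rw [← hcompl, Nat.card_eq_fintype_card, Nat.card_eq_fintype_card, Nat.card_eq_fintype_card,
    Fintype.card_subtype_compl, Nat.add_sub_cancel' (Fintype.card_subtype_le _), Fintype.card_fun]

variable {R : Type*} [CommRing R] {ι ι' κ κ' n : Type*}

namespace Matrix

variable (R ι κ) in
def dualFrames [Fintype ι] [DecidableEq κ] : Set (Matrix ι κ R × Matrix ι κ R) :=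
  {XY | XY.2ᵀ * XY.1 = 1}

variable (κ) in
def orthDualFrames [Fintype ι] [DecidableEq κ] (A B : Matrix ι κ' R) :
    Set (Matrix ι κ R × Matrix ι κ R) :=
  {XY | XY ∈ dualFrames R ι κ ∧ Bᵀ * XY.1 = 0 ∧ XY.2ᵀ * A = 0}

lemma transpose_fromCols_mul_fromCols_eq_one_iff [Fintype ι] [DecidableEq κ] [DecidableEq κ']
    (X₁ Y₁ : Matrix ι κ R) (X₂ Y₂ : Matrix ι κ' R) :
    (fromCols Y₁ Y₂)ᵀ * fromCols X₁ X₂ = 1 ↔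
      Y₁ᵀ * X₁ = 1 ∧ Y₁ᵀ * X₂ = 0 ∧ Y₂ᵀ * X₁ = 0 ∧ Y₂ᵀ * X₂ = 1 := by
  rw [transpose_fromCols, fromRows_mul_fromCols, ← fromBlocks_one, fromBlocks_inj]

def dualFramesSumEquiv [Fintype ι] [DecidableEq κ] [DecidableEq κ'] :
    dualFrames R ι (κ ⊕ κ') ≃ Σ AB : dualFrames R ι κ', orthDualFrames κ AB.1.1 AB.1.2 where
  toFun XY :=
    have h := (transpose_fromCols_mul_fromCols_eq_one_iff _ _ _ _).mp
      (by rw [fromCols_toCols, fromCols_toCols]; exact XY.2)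
    ⟨⟨(XY.1.1.toCols₂, XY.1.2.toCols₂), h.2.2.2⟩,
      ⟨(XY.1.1.toCols₁, XY.1.2.toCols₁), h.1, h.2.2.1, h.2.1⟩⟩
  invFun T := ⟨(fromCols T.2.1.1 T.1.1.1, fromCols T.2.1.2 T.1.1.2),
    (transpose_fromCols_mul_fromCols_eq_one_iff _ _ _ _).mpr
      ⟨T.2.2.1, T.2.2.2.2, T.2.2.2.1, T.1.2⟩⟩
  left_inv XY := Subtype.ext (Prod.ext (fromCols_toCols _) (fromCols_toCols _))
  right_inv _ := rfl

lemma transpose_fromRows_mul_fromRows [Fintype ι] [Fintype ι']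
    (X₁ : Matrix ι κ R) (Y₁ : Matrix ι κ' R) (X₂ : Matrix ι' κ R) (Y₂ : Matrix ι' κ' R) :
    (fromRows Y₁ Y₂)ᵀ * fromRows X₁ X₂ = Y₁ᵀ * X₁ + Y₂ᵀ * X₂ := by
  rw [transpose_fromRows, fromCols_mul_fromRows]

lemma mem_orthDualFrames_fromRows_zero_one_iff [Fintype ι] [Fintype κ'] [DecidableEq κ]
    [DecidableEq κ'] (XY : Matrix (ι ⊕ κ') κ R × Matrix (ι ⊕ κ') κ R) :
    XY ∈ orthDualFrames κ (fromRows (0 : Matrix ι κ' R) 1) (fromRows 0 1) ↔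
      (XY.1.toRows₁, XY.2.toRows₁) ∈ dualFrames R ι κ ∧ XY.1.toRows₂ = 0 ∧ XY.2.toRows₂ = 0 := by
  obtain ⟨X, Y⟩ := XY
  obtain ⟨X₁, X₂, rfl⟩ : ∃ X₁ X₂, X = fromRows X₁ X₂ := ⟨_, _, (fromRows_toRows X).symm⟩
  obtain ⟨Y₁, Y₂, rfl⟩ : ∃ Y₁ Y₂, Y = fromRows Y₁ Y₂ := ⟨_, _, (fromRows_toRows Y).symm⟩
  simp only [orthDualFrames, dualFrames, Set.mem_ofPred_eq, transpose_fromRows_mul_fromRows,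
    toRows₁_fromRows, toRows₂_fromRows, transpose_zero, Matrix.zero_mul, Matrix.mul_zero,
    transpose_one, Matrix.one_mul, Matrix.mul_one, zero_add, transpose_eq_zero]
  constructor <;> rintro ⟨h, rfl, rfl⟩ <;> simpa using h

def orthDualFramesFromRowsEquiv [Fintype ι] [Fintype κ'] [DecidableEq κ] [DecidableEq κ'] :
    orthDualFrames κ (fromRows (0 : Matrix ι κ' R) (1 : Matrix κ' κ' R)) (fromRows 0 1) ≃
      dualFrames R ι κ where
  toFun XY := ⟨(XY.1.1.toRows₁, XY.1.2.toRows₁),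
    ((mem_orthDualFrames_fromRows_zero_one_iff _).mp XY.2).1⟩
  invFun XY := ⟨(fromRows XY.1.1 (0 : Matrix κ' κ R), fromRows XY.1.2 0),
    (mem_orthDualFrames_fromRows_zero_one_iff _).mpr ⟨XY.2, rfl, rfl⟩⟩
  left_inv XY := by
    obtain ⟨-, hX, hY⟩ := (mem_orthDualFrames_fromRows_zero_one_iff _).mp XY.2
    refine Subtype.ext (Prod.ext ?_ ?_)
    · simpa only [← hX] using fromRows_toRows XY.1.1
    · simpa only [← hY] using fromRows_toRows XY.1.2
  right_inv _ := rfl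

lemma transpose_inv_transpose_mul_mul_val_mul [Fintype ι] [DecidableEq ι] (P : (Matrix ι ι R)ˣ)
    (M : Matrix ι κ R) (N : Matrix ι κ' R) : (P.invᵀ * N)ᵀ * (P.val * M) = Nᵀ * M := by
  rw [transpose_mul, transpose_transpose, Matrix.mul_assoc, ← Matrix.mul_assoc P.inv, P.inv_val,
    Matrix.one_mul]

def orthDualFramesUnitsEquiv [Fintype ι] [DecidableEq ι] [DecidableEq κ] (P : (Matrix ι ι R)ˣ)
    (A B : Matrix ι κ' R) :
    orthDualFrames κ A B ≃ orthDualFrames κ (P.val * A) (P.invᵀ * B) :=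
  Equiv.subtypeEquiv
    { toFun XY := (P.val * XY.1, P.invᵀ * XY.2)
      invFun XY := (P.inv * XY.1, P.valᵀ * XY.2)
      left_inv XY := by
        simp only [← Matrix.mul_assoc, ← transpose_mul, P.inv_val, transpose_one, Matrix.one_mul]
      right_inv XY := by
        simp only [← Matrix.mul_assoc, ← transpose_mul, P.val_inv, transpose_one, Matrix.one_mul] }
    fun XY => by
      simp only [orthDualFrames, dualFrames, Set.mem_ofPred_eq, Equiv.coe_fn_mk,
        transpose_inv_transpose_mul_mul_val_mul]

def dualFramesReindex [Fintype ι] [Fintype ι'] [DecidableEq κ] [DecidableEq κ'] (e : ι ≃ ι')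
    (f : κ ≃ κ') : dualFrames R ι κ ≃ dualFrames R ι' κ' :=
  Equiv.subtypeEquiv ((reindex e f).prodCongr (reindex e f)) fun XY => by
    simp only [dualFrames, Set.mem_ofPred_eq, Equiv.prodCongr_apply, Prod.map, reindex_apply,
      transpose_submatrix, submatrix_mul_equiv]
    rw [← (reindex f f).apply_eq_iff_eq, reindex_apply, reindex_apply, submatrix_one_equiv]

lemma exists_units_mulVec_eq_single_of_isUnit [Fintype n] [DecidableEq n] {x y : n → R}
    (hyx : y ⬝ᵥ x = 1) {j : n} (hj : IsUnit (y j)) :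
    ∃ P : (Matrix n n R)ˣ, P.val *ᵥ x = Pi.single j 1 ∧ y ᵥ* P.inv = Pi.single j 1 := by
  obtain ⟨v, hv⟩ : ∃ v, y j * v = 1 := ⟨_, hj.mul_val_inv⟩
  set P : Matrix n n R := (1 - vecMulVec x y).updateRow j y
  set Q : Matrix n n R := (1 - vecMulVec (Pi.single j 1) (v • y)).updateCol j x
  have hProw : ∀ r ≠ j, P r = Pi.single r 1 - x r • y := fun r hr => by
    ext k; simp [P, hr, one_apply, Pi.single_apply, vecMulVec_apply, eq_comm]
  have hQcol : ∀ c ≠ j, (fun k => Q k c) = Pi.single c 1 - (v * y c) • Pi.single j 1 :=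
    fun c hc => by ext k; simp [Q, hc, one_apply, Pi.single_apply, vecMulVec_apply]
  have hPx : P *ᵥ x = Pi.single j 1 := by
    ext r
    by_cases hr : r = j
    · subst hr; simpa [P, mulVec] using hyx
    · simp only [mulVec, hProw r hr, sub_dotProduct, smul_dotProduct, single_dotProduct, hyx]
      simp [hr]
  have hyQ : y ᵥ* Q = Pi.single j 1 := by
    ext c
    by_cases hc : c = j
    · subst hc; simpa [Q, vecMul, dotProduct] using hyx
    · simp only [vecMul, hQcol c hc, dotProduct_sub, dotProduct_smul, dotProduct_single, mul_one,
        smul_eq_mul, Pi.single_eq_of_ne hc]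
      linear_combination (-y c) * hv
  have hPQ : P * Q = 1 := by
    ext r c
    by_cases hr : r = j
    · subst hr
      have h : (P * Q) r c = (y ᵥ* Q) c := by simp [P, mul_apply, vecMul, dotProduct]
      rw [h, hyQ, one_eq_pi_single]
    by_cases hc : c = j
    · subst hc
      have h : (P * Q) r c = (P *ᵥ x) r := by simp [Q, mul_apply, mulVec, dotProduct]
      rw [h, hPx, one_eq_pi_single, Pi.single_eq_of_ne hr, Pi.single_eq_of_ne (Ne.symm hr)]
    rw [mul_apply', hProw r hr, hQcol c hc]
    simp only [dotProduct_sub, dotProduct_smul, dotProduct_single, Pi.sub_apply, Pi.smul_apply,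
      smul_eq_mul, mul_one, Pi.single_eq_of_ne (Ne.symm hr), one_eq_pi_single]
    linear_combination (x r * y c) * hv
  exact ⟨⟨P, Q, hPQ, mul_eq_one_comm.mp hPQ⟩, hPx, hyQ⟩

lemma exists_isUnit_of_dotProduct_eq_one [Fintype n] [IsLocalRing R] {x y : n → R}
    (h : y ⬝ᵥ x = 1) : ∃ i, IsUnit (y i) := by
  by_contra! hy
  have hmem : y ⬝ᵥ x ∈ IsLocalRing.maximalIdeal R :=
    Ideal.sum_mem _ fun i _ =>
      Ideal.mul_mem_right _ _ ((IsLocalRing.mem_maximalIdeal _).mpr (hy i))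
  exact (IsLocalRing.mem_maximalIdeal _).mp (h ▸ hmem) isUnit_one

lemma exists_units_mulVec_eq_single [Fintype n] [DecidableEq n] [IsLocalRing R] {x y : n → R}
    (hyx : y ⬝ᵥ x = 1) (j : n) :
    ∃ P : (Matrix n n R)ˣ, P.val *ᵥ x = Pi.single j 1 ∧ y ᵥ* P.inv = Pi.single j 1 := by
  obtain ⟨i, hi⟩ := exists_isUnit_of_dotProduct_eq_one hyx
  obtain ⟨P, hPx, hyP⟩ := exists_units_mulVec_eq_single_of_isUnit hyx hi
  have hσ : Pi.single (M := fun _ => R) i 1 ∘ Equiv.swap i j = Pi.single j 1 := by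
    ext k; simp [Pi.single_apply, Equiv.swap_apply_eq_iff]
  let S := (permMatrixHom (n := n) (R := R)).toHomUnits (Equiv.swap i j)
  refine ⟨S * P, ?_, ?_⟩
  · change ((Equiv.swap i j).permMatrix R * P.val) *ᵥ x = _
    rw [← mulVec_mulVec, hPx, permMatrix_mulVec, hσ]
  · change y ᵥ* (P.inv * (Equiv.swap i j).permMatrix R) = _
    rw [← vecMul_vecMul, hyP, vecMul_permMatrix, Equiv.symm_swap, hσ]

lemma exists_dotProduct_eq_one_iff [Fintype n] [IsLocalRing R] (y : n → R) :
    (∃ x, y ⬝ᵥ x = 1) ↔ ∃ i, IsUnit (y i) := by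
  refine ⟨fun ⟨x, hx⟩ => exists_isUnit_of_dotProduct_eq_one hx, fun ⟨i, hi⟩ => ?_⟩
  classical
  exact ⟨Pi.single i ↑hi.unit⁻¹, by rw [dotProduct_single, IsUnit.mul_val_inv]⟩

lemma exists_units_mul_eq_fromRows_zero_one [Fintype ι] [DecidableEq ι] [IsLocalRing R]
    {AB : Matrix (ι ⊕ Unit) Unit R × Matrix (ι ⊕ Unit) Unit R} (hAB : AB ∈ dualFrames R _ _) :
    ∃ P : (Matrix (ι ⊕ Unit) (ι ⊕ Unit) R)ˣ,
      P.val * AB.1 = fromRows 0 1 ∧ P.invᵀ * AB.2 = fromRows 0 1 := by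
  have hyx : (fun i => AB.2 i ()) ⬝ᵥ (fun i => AB.1 i ()) = 1 := congrFun (congrFun hAB ()) ()
  obtain ⟨P, hPx, hyP⟩ := exists_units_mulVec_eq_single hyx (Sum.inr ())
  refine ⟨P, ?_, ?_⟩ <;> ext i ⟨⟩
  · change (P.val *ᵥ fun i => AB.1 i ()) i = _
    rw [hPx]
    cases i <;> simp
  · change (P.invᵀ *ᵥ fun i => AB.2 i ()) i = _
    rw [mulVec_transpose, hyP]
    cases i <;> simp

lemma card_dualFrames_sum_unit [Fintype ι] [DecidableEq ι] [DecidableEq κ] [IsLocalRing R] :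
    Nat.card (dualFrames R (ι ⊕ Unit) (κ ⊕ Unit)) =
      Nat.card (dualFrames R (ι ⊕ Unit) Unit) * Nat.card (dualFrames R ι κ) := by
  have fiber (AB : dualFrames R (ι ⊕ Unit) Unit) :
      Nonempty (orthDualFrames κ AB.1.1 AB.1.2 ≃ dualFrames R ι κ) := by
    obtain ⟨P, hA, hB⟩ := exists_units_mul_eq_fromRows_zero_one AB.2
    exact ⟨(orthDualFramesUnitsEquiv P _ _).trans
      ((Equiv.setCongr (by rw [hA, hB])).trans orthDualFramesFromRowsEquiv)⟩
  rw [← Nat.card_prod]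
  exact Nat.card_congr (dualFramesSumEquiv.trans
    ((Equiv.sigmaCongrRight fun AB => (fiber AB).some).trans (Equiv.sigmaEquivProd _ _)))

def dualFramesUnitEquiv [Fintype n] :
    dualFrames R n Unit ≃ Σ y : {y : n → R // ∃ x, y ⬝ᵥ x = 1}, {x : n → R // y.1 ⬝ᵥ x = 1} where
  toFun XY :=
    have h : (fun i => XY.1.2 i ()) ⬝ᵥ (fun i => XY.1.1 i ()) = 1 := congrFun (congrFun XY.2 ()) ()
    ⟨⟨fun i => XY.1.2 i (), _, h⟩, ⟨fun i => XY.1.1 i (), h⟩⟩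
  invFun T := ⟨(replicateCol Unit T.2.1, replicateCol Unit T.1.1), by ext ⟨⟩ ⟨⟩; exact T.2.2⟩
  left_inv _ := rfl
  right_inv _ := rfl

lemma nonempty_dotProduct_eq_one_equiv [Fintype ι] [DecidableEq ι] [IsLocalRing R]
    {y : ι ⊕ Unit → R} (hy : ∃ x, y ⬝ᵥ x = 1) :
    Nonempty ({x // y ⬝ᵥ x = 1} ≃ (ι → R)) := by
  obtain ⟨x₀, hx₀⟩ := hy
  obtain ⟨P, -, hyP⟩ := exists_units_mulVec_eq_single hx₀ (Sum.inr ())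
  have hy (x : ι ⊕ Unit → R) : y ⬝ᵥ x = (P.val *ᵥ x) (Sum.inr ()) := by
    calc y ⬝ᵥ x = (y ᵥ* P.inv) ⬝ᵥ (P.val *ᵥ x) := by
          rw [dotProduct_mulVec, vecMul_vecMul, P.inv_val, vecMul_one]
      _ = (P.val *ᵥ x) (Sum.inr ()) := by rw [hyP, single_one_dotProduct]
  let mulVecP : (ι ⊕ Unit → R) ≃ (ι ⊕ Unit → R) :=
    { toFun x := P.val *ᵥ x
      invFun u := P.inv *ᵥ u
      left_inv x := by simp only [mulVec_mulVec, P.inv_val, one_mulVec]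
      right_inv u := by simp only [mulVec_mulVec, P.val_inv, one_mulVec] }
  let dropInr : {u : ι ⊕ Unit → R // u (Sum.inr ()) = 1} ≃ (ι → R) :=
    { toFun u i := u.1 (Sum.inl i)
      invFun v := ⟨Sum.elim v 1, rfl⟩
      left_inv u := Subtype.ext <| funext <| by rintro (i | ⟨⟩); exacts [rfl, u.2.symm]
      right_inv _ := rfl }
  exact ⟨(mulVecP.subtypeEquiv fun x => by rw [hy]; rfl).trans dropInr⟩

lemma card_dualFrames_sum_unit_unit [Fintype ι] [DecidableEq ι] [IsLocalRing R] [Finite R] :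
    Nat.card (dualFrames R (ι ⊕ Unit) Unit) =
      Nat.card {y : ι ⊕ Unit → R // ∃ i, IsUnit (y i)} * Nat.card R ^ Fintype.card ι := by
  rw [← Nat.card_eq_fintype_card, ← Nat.card_fun, ← Nat.card_prod]
  refine Nat.card_congr (dualFramesUnitEquiv.trans
    ((Equiv.sigmaCongrRight fun y => (nonempty_dotProduct_eq_one_equiv y.2).some).trans
      ((Equiv.sigmaEquivProd _ _).trans (Equiv.prodCongr ?_ (Equiv.refl _)))))
  exact Equiv.subtypeEquivRight exists_dotProduct_eq_one_iff

lemma card_dualFrames_of_isEmpty_right [Fintype ι] [DecidableEq κ] [IsEmpty κ] :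
    Nat.card (dualFrames R ι κ) = 1 :=
  Nat.card_eq_one_iff_unique.mpr ⟨inferInstance, ⟨⟨(0, 0), Subsingleton.elim _ _⟩⟩⟩

lemma card_dualFrames_of_isEmpty_left [Fintype ι] [DecidableEq κ] [IsEmpty ι] [Nonempty κ]
    [Nontrivial R] : Nat.card (dualFrames R ι κ) = 0 := by
  obtain ⟨k⟩ := ‹Nonempty κ›
  refine Nat.card_eq_zero.mpr (Or.inl ⟨fun XY => zero_ne_one (α := R) ?_⟩)
  simpa [Subsingleton.elim XY.1.1 0] using congrFun (congrFun XY.2 k) k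

lemma card_dualFrames_fin_succ_succ [IsLocalRing R] [Finite R] (l m : ℕ) :
    (Nat.card (dualFrames R (Fin (l + 1)) (Fin (m + 1))) : ℝ) =
      ((Nat.card R : ℝ) ^ (l + 1) - (Nat.card (nonunits R) : ℝ) ^ (l + 1)) *
        (Nat.card R : ℝ) ^ l * Nat.card (dualFrames R (Fin l) (Fin m)) := by
  have e (k : ℕ) : Fin (k + 1) ≃ Fin k ⊕ Unit := Fintype.equivOfCardEq (by simp)
  have hunimod := card_exists_isUnit_add_card_nonunits_pow R (Fin l ⊕ Unit)
  rw [Fintype.card_sum, Fintype.card_fin, Fintype.card_unit] at hunimod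
  replace hunimod := congrArg ((↑) : ℕ → ℝ) hunimod
  rw [Nat.card_congr (dualFramesReindex (e l) (e m)), card_dualFrames_sum_unit,
    card_dualFrames_sum_unit_unit, Fintype.card_fin]
  push_cast at hunimod ⊢
  rw [← hunimod]
  ring

/-- With the truncated exponent `l - i` this also holds for `m > l`, where both sides vanish: the
factor `i = l` is `1 - 1`. -/
theorem card_dualFrames_fin [IsLocalRing R] [Finite R] (l m : ℕ) :
    (Nat.card (dualFrames R (Fin l) (Fin m)) : ℝ) =
      (Nat.card R : ℝ) ^ (2 * l * m - m ^ 2 : ℤ) *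
        ∏ i ∈ Finset.range m, (1 - ((Nat.card (nonunits R) : ℝ) / Nat.card R) ^ (l - i)) := by
  induction m generalizing l with
  | zero => rw [card_dualFrames_of_isEmpty_right]; simp
  | succ m ih =>
    rw [Finset.prod_range_succ']
    cases l with
    | zero => rw [card_dualFrames_of_isEmpty_left]; simp
    | succ l =>
      have hq : (Nat.card R : ℝ) ≠ 0 := Nat.cast_ne_zero.mpr Nat.card_pos.ne'
      rw [card_dualFrames_fin_succ_succ, ih l]
      simp only [Nat.add_sub_add_right, Nat.sub_zero]
      have hfactor : (Nat.card R : ℝ) ^ (l + 1) - (Nat.card (nonunits R) : ℝ) ^ (l + 1) =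
          (Nat.card R : ℝ) ^ (l + 1) *
            (1 - ((Nat.card (nonunits R) : ℝ) / Nat.card R) ^ (l + 1)) := by
        rw [div_pow, mul_sub, mul_one, mul_div_cancel₀ _ (pow_ne_zero _ hq)]
      have hexp : (Nat.card R : ℝ) ^
            (2 * ((l + 1 : ℕ) : ℤ) * ((m + 1 : ℕ) : ℤ) - ((m + 1 : ℕ) : ℤ) ^ 2) =
          (Nat.card R : ℝ) ^ (l + 1) * (Nat.card R : ℝ) ^ l *
            (Nat.card R : ℝ) ^ (2 * (l : ℤ) * m - (m : ℤ) ^ 2) := by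
        rw [← zpow_natCast, ← zpow_natCast, ← zpow_add₀ hq, ← zpow_add₀ hq]
        congr 1
        push_cast
        ring
      rw [hfactor, hexp]
      ring

end Matrix

namespace ZMod

instance isLocalRing_prime_pow (p b : ℕ) [Fact p.Prime] : IsLocalRing (ZMod (p ^ (b + 1))) :=
  have : Fact (1 < p ^ (b + 1)) := ⟨Nat.one_lt_pow b.succ_ne_zero (Fact.out : p.Prime).one_lt⟩
  IsLocalRing.of_surjective' (PadicInt.toZModPow (b + 1)) (ZMod.ringHom_surjective _)

lemma card_nonunits_prime_pow {p : ℕ} (hp : p.Prime) (b : ℕ) :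
    Nat.card (nonunits (ZMod (p ^ (b + 1)))) = p ^ b := by
  have : NeZero (p ^ (b + 1)) := ⟨pow_ne_zero _ hp.ne_zero⟩
  have := card_nonunits_add_card_units (ZMod (p ^ (b + 1)))
  rw [Nat.card_eq_fintype_card (α := (ZMod _)ˣ), ZMod.card_units_eq_totient,
    Nat.totient_prime_pow hp b.succ_pos, Nat.card_zmod, Nat.succ_sub_one] at this
  have hsplit : p ^ (b + 1) = p ^ b * (p - 1) + p ^ b := by
    rw [← mul_add_one, Nat.sub_add_cancel hp.one_lt.le, pow_succ]
  linarith

theorem card_dualFrames_prime_pow {p : ℕ} (hp : p.Prime) (b : ℕ) {l m : ℕ} (hlm : m ≤ l) :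
    (Nat.card (dualFrames (ZMod (p ^ (b + 1))) (Fin l) (Fin m)) : ℝ) =
      (p : ℝ) ^ (((b + 1 : ℕ) : ℤ) * (2 * l * m - m ^ 2)) *
        ∏ i ∈ Finset.range m, (1 - (p : ℝ) ^ ((i : ℤ) - l)) := by
  have : Fact p.Prime := ⟨hp⟩
  have : NeZero (p ^ (b + 1)) := ⟨pow_ne_zero _ hp.ne_zero⟩
  have hp0 : (p : ℝ) ≠ 0 := Nat.cast_ne_zero.mpr hp.ne_zero
  have hfactor (i : ℕ) (hi : i ∈ Finset.range m) :
      1 - (((p ^ b : ℕ) : ℝ) / ((p ^ (b + 1) : ℕ) : ℝ)) ^ (l - i) =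
        1 - (p : ℝ) ^ ((i : ℤ) - l) := by
    have hil : i ≤ l := by linarith [Finset.mem_range.mp hi]
    rw [Nat.cast_pow, Nat.cast_pow, pow_succ, div_mul_cancel_left₀ (pow_ne_zero _ hp0),
      ← zpow_natCast, _root_.inv_zpow', Nat.cast_sub hil, neg_sub]
  rw [card_dualFrames_fin, Nat.card_zmod, card_nonunits_prime_pow hp,
    Finset.prod_congr rfl hfactor, Nat.cast_pow, ← zpow_natCast, ← _root_.zpow_mul]

end ZMod

theorem stmt8_general (p : ℕ) (hp : p.Prime) (l m : ℕ) (hlm : m ≤ l) :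
    Tendsto
      (fun a : ℕ =>
        (p : ℝ) ^ ((-2 * (l : ℤ) * m + (m : ℤ) ^ 2) * a) *
          (Nat.card {XY : Matrix (Fin l) (Fin m) (ZMod (p ^ a)) ×
              Matrix (Fin l) (Fin m) (ZMod (p ^ a)) // XY.2ᵀ * XY.1 = 1} : ℝ))
      atTop (nhds (∏ i ∈ Finset.range m, (1 - (p : ℝ) ^ ((i : ℤ) - l)))) := by
  have hp0 : (p : ℝ) ≠ 0 := Nat.cast_ne_zero.mpr hp.ne_zero
  refine tendsto_const_nhds.congr' ?_
  filter_upwards [eventually_ge_atTop 1] with a ha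
  obtain ⟨b, rfl⟩ := Nat.exists_eq_add_of_le' ha
  change _ = _ * (Nat.card (dualFrames (ZMod (p ^ (b + 1))) (Fin l) (Fin m)) : ℝ)
  rw [ZMod.card_dualFrames_prime_pow hp b hlm, ← mul_assoc, ← zpow_add₀ hp0]
  convert (one_mul _).symm using 2
  convert zpow_zero (p : ℝ) using 2
  push_cast
  ring

/-- In the split case `K_p = ℚ_p ⊕ ℚ_p`, the local density `α_p(1_l, 1_m)` is the limit
`lim_{a→∞} p^{a(−2lm+m²)} #{(X,Y) ∈ (M_{l,m}(ℤ/p^aℤ))² : Yᵀ X = 1_m}`, and it equals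
`∏_{i=0}^{m-1} (1 − p^{i−l})`. -/
theorem stmt8 (p : ℕ) (hp : p.Prime) (l m : ℕ) (hm : 1 ≤ m) (hlm : m ≤ l) :
    Tendsto
      (fun a : ℕ =>
        (p : ℝ) ^ ((-2 * (l : ℤ) * m + (m : ℤ) ^ 2) * a) *
          (Nat.card {XY : Matrix (Fin l) (Fin m) (ZMod (p ^ a)) ×
              Matrix (Fin l) (Fin m) (ZMod (p ^ a)) // XY.2ᵀ * XY.1 = 1} : ℝ))
      atTop (nhds (∏ i ∈ Finset.range m, (1 - (p : ℝ) ^ ((i : ℤ) - l)))) :=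
  stmt8_general p hp l m hlm
end

section
/- For l ≥ m ≥ 1 and a prime p, the number of pairs (X, Y) of l×m matrices over Z/pZ satisfying Yᵀ X = 1_m equals p^{2lm − m²} · ∏_{i=0}^{m-1} (1 − p^{−l+i}). -/
/-!
Project a pair `(X, Y)` onto `X`. The fibre over `X` is, after transposing, the set of left
inverses of `X`; it is nonempty exactly when the columns of `X` are linearly independent, and
it is then a coset of the kernel of the surjection `Z ↦ Z * X` from `m × l` to `m × m` matrices,
so it has `p ^ (lm - m²)` elements. There are `∏ i < m, (p ^ l - p ^ i)` matrices `X` with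
independent columns, and `p ^ l - p ^ i = p ^ l (1 - p ^ (i - l))`.
-/

open Matrix

namespace Matrix

variable {K n : Type*} [Field K] [Fintype n]

section LeftInverse

variable {k : Type*} [Fintype k] [DecidableEq k]

theorem exists_mul_eq_one_iff_linearIndependent_col {X : Matrix n k K} :
    (∃ Z : Matrix k n K, Z * X = 1) ↔ LinearIndependent K X.col := by
  classical
  rw [← mulVec_injective_iff]
  constructor
  · rintro ⟨Z, hZ⟩ v w hvw
    simpa [mulVec_mulVec, hZ] using congrArg (Z *ᵥ ·) hvw
  · intro h
    obtain ⟨g, hg⟩ := X.mulVecLin.exists_leftInverse_of_injective (LinearMap.ker_eq_bot.mpr h)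
    refine ⟨LinearMap.toMatrix' g, ?_⟩
    rw [← LinearMap.toMatrix'_toLin' X, ← LinearMap.toMatrix'_comp, Matrix.toLin'_apply', hg,
      LinearMap.toMatrix'_id]

variable [Fintype K]

theorem card_mul_eq_one_of_mul_eq_one {X : Matrix n k K} {Z₀ : Matrix k n K} (hZ₀ : Z₀ * X = 1) :
    Nat.card {Z : Matrix k n K // Z * X = 1} =
      Fintype.card K ^ (Fintype.card k * Fintype.card n - Fintype.card k * Fintype.card k) := by
  set f := mulRightLinearMap k K X
  have hsurj : Function.Surjective f := fun A => ⟨A * Z₀, by simp [f, Matrix.mul_assoc, hZ₀]⟩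
  have hfiber : Nat.card {Z : Matrix k n K // Z * X = 1} = Nat.card (LinearMap.ker f) := by
    have e : {Z : Matrix k n K // Z * X = 1} ≃ f.toAddMonoidHom ⁻¹' {f Z₀} :=
      Equiv.subtypeEquivRight fun Z => by simp [f, hZ₀]
    exact Nat.card_congr (e.trans (f.toAddMonoidHom.fiberEquivKer Z₀))
  have hrank : Module.finrank K (LinearMap.ker f) =
      Fintype.card k * Fintype.card n - Fintype.card k * Fintype.card k := by
    have := f.finrank_range_add_finrank_ker
    rw [LinearMap.range_eq_top.mpr hsurj, finrank_top] at this
    simp only [Module.finrank_matrix, Module.finrank_self, mul_one] at this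
    omega
  rw [hfiber, Module.natCard_eq_pow_finrank (K := K), hrank, Nat.card_eq_fintype_card]

open Classical in
theorem card_transpose_mul_eq_one (X : Matrix n k K) :
    Nat.card {Y : Matrix n k K // Yᵀ * X = 1} =
      if LinearIndependent K X.col then
        Fintype.card K ^ (Fintype.card k * Fintype.card n - Fintype.card k * Fintype.card k)
      else 0 := by
  have htranspose : Nat.card {Y : Matrix n k K // Yᵀ * X = 1} =
      Nat.card {Z : Matrix k n K // Z * X = 1} :=
    Nat.card_congr ((transposeAddEquiv n k K).toEquiv.subtypeEquiv fun _ => Iff.rfl)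
  rw [htranspose]
  split_ifs with h
  · obtain ⟨Z₀, hZ₀⟩ := exists_mul_eq_one_iff_linearIndependent_col.mpr h
    exact card_mul_eq_one_of_mul_eq_one hZ₀
  · rw [Nat.card_eq_zero]
    exact Or.inl ⟨fun Z => h (exists_mul_eq_one_iff_linearIndependent_col.mp ⟨Z.1, Z.2⟩)⟩

end LeftInverse

variable [Fintype K] {k : ℕ}

theorem card_linearIndependent_col (hk : k ≤ Fintype.card n) :
    Nat.card {X : Matrix n (Fin k) K // LinearIndependent K X.col} =
      ∏ i : Fin k, (Fintype.card K ^ Fintype.card n - Fintype.card K ^ i.val) := by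
  have hcard := card_linearIndependent (K := K) (V := n → K) (k := k)
    (by rwa [Module.finrank_fintype_fun_eq_card])
  rw [Module.finrank_fintype_fun_eq_card] at hcard
  rw [← hcard]
  exact Nat.card_congr ((transposeAddEquiv n (Fin k) K).toEquiv.subtypeEquiv fun _ => Iff.rfl)

theorem card_pairs_transpose_mul_eq_one (hk : k ≤ Fintype.card n) :
    Nat.card {XY : Matrix n (Fin k) K × Matrix n (Fin k) K // XY.2ᵀ * XY.1 = 1} =
      (∏ i : Fin k, (Fintype.card K ^ Fintype.card n - Fintype.card K ^ i.val)) *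
        Fintype.card K ^ (k * Fintype.card n - k * k) := by
  classical
  refine (Nat.card_congr
    (Equiv.subtypeProdEquivSigmaSubtype fun X Y : Matrix n (Fin k) K => Yᵀ * X = 1)).trans ?_
  rw [Nat.card_sigma]
  simp only [card_transpose_mul_eq_one, Fintype.card_fin]
  rw [Finset.sum_ite, Finset.sum_const_zero, add_zero, Finset.sum_const, smul_eq_mul,
    ← Fintype.card_subtype, ← Nat.card_eq_fintype_card, card_linearIndependent_col hk]

end Matrix

theorem prod_pow_sub_pow_mul_pow {F : Type*} [Field F] {q : F} (hq : q ≠ 0) {l m : ℕ}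
    (hml : m ≤ l) :
    (∏ i ∈ Finset.range m, (q ^ l - q ^ i)) * q ^ (m * l - m * m) =
      q ^ (2 * l * m - m ^ 2) * ∏ i ∈ Finset.range m, (1 - q ^ ((i : ℤ) - l)) := by
  have hfactor (i : ℕ) : q ^ l - q ^ i = q ^ l * (1 - q ^ ((i : ℤ) - l)) := by
    rw [mul_sub, mul_one, ← zpow_natCast, ← zpow_add₀ hq, add_sub_cancel, zpow_natCast,
      zpow_natCast]
  have hexp : l * m + (m * l - m * m) = 2 * l * m - m ^ 2 := by
    rw [← Nat.add_sub_assoc (Nat.mul_le_mul_left m hml), sq]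
    ring_nf
  rw [Finset.prod_congr rfl fun i _ => hfactor i, Finset.prod_mul_distrib, Finset.prod_const,
    Finset.card_range, ← pow_mul, ← hexp, pow_add]
  ring

theorem stmt9_general (p : ℕ) (hp : p.Prime) (l m : ℕ) (hlm : m ≤ l) :
    (Nat.card {XY : Matrix (Fin l) (Fin m) (ZMod p) × Matrix (Fin l) (Fin m) (ZMod p) //
        XY.2ᵀ * XY.1 = 1} : ℝ) =
      (p : ℝ) ^ (2 * l * m - m ^ 2) *
        ∏ i ∈ Finset.range m, (1 - (p : ℝ) ^ ((i : ℤ) - l)) := by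
  have := Fact.mk hp
  have hcount := card_pairs_transpose_mul_eq_one (K := ZMod p) (n := Fin l) (k := m)
    (by rwa [Fintype.card_fin])
  simp only [ZMod.card, Fintype.card_fin] at hcount
  have hcast (i : ℕ) (hi : i ∈ Finset.range m) :
      ((p ^ l - p ^ i : ℕ) : ℝ) = (p : ℝ) ^ l - (p : ℝ) ^ i := by
    rw [Nat.cast_sub (Nat.pow_le_pow_right hp.pos ((Finset.mem_range.mp hi).le.trans hlm)),
      Nat.cast_pow, Nat.cast_pow]
  rw [hcount, Nat.cast_mul, Nat.cast_prod,
    Fin.prod_univ_eq_prod_range (fun i => ((p ^ l - p ^ i : ℕ) : ℝ)),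
    Finset.prod_congr rfl hcast, Nat.cast_pow,
    prod_pow_sub_pow_mul_pow (Nat.cast_ne_zero.mpr hp.ne_zero) hlm]

/-- For `l ≥ m ≥ 1` and a prime `p`, the number of pairs `(X, Y)` of `l × m`
matrices over `ℤ/pℤ` with `Yᵀ X = 1ₘ` equals `p^(2lm - m²) ∏_{i=0}^{m-1} (1 - p^(i-l))`. -/
theorem stmt9 (p : ℕ) (hp : p.Prime) (l m : ℕ) (hm : 1 ≤ m) (hlm : m ≤ l) :
    (Nat.card {XY : Matrix (Fin l) (Fin m) (ZMod p) × Matrix (Fin l) (Fin m) (ZMod p) //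
        XY.2ᵀ * XY.1 = 1} : ℝ) =
      (p : ℝ) ^ (2 * l * m - m ^ 2) *
        ∏ i ∈ Finset.range m, (1 - (p : ℝ) ^ ((i : ℤ) - l)) :=
  stmt9_general p hp l m hlm
end

section
/- Let L(t) be a rational function in t over a field, and suppose L(t) = N(t)/(∏_{i=1}^{m}(1 + (−1)^i p^{−i}X^{−1}t) ∏_{i=1}^{m}(1 − p^{−2i}X²t²)) with N a polynomial of degree ≤ m in t. If additionally L satisfies the functional equation L(t)|_{X ↦ −X^{−1}} = L(t), then L(t) = c/(∏_{i=1}^{m}(1 + (−1)^i p^{−i}X^{−1}t)(1 − (−1)^i p^{−i}Xt)) for some constant c independent of t. -/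
/-- The field `ℚ(X)` of rational functions in `X`. -/
abbrev FX : Type := RatFunc ℚ

/-- The field `ℚ(X)(t)` of rational functions in `t` over `ℚ(X)`. -/
abbrev FXt : Type := RatFunc FX

/-- The element `X` of `ℚ(X)(t)`. -/
noncomputable def xVar : FXt := RatFunc.C (RatFunc.X : FX)

/-- The element `t` of `ℚ(X)(t)`. -/
noncomputable def tVar : FXt := RatFunc.X

/-! The denominator is `A·B·B'` with `A = ∏ (1 + aᵢ t)`, `B = ∏ (1 + bᵢ t)`,
`B' = ∏ (1 - bᵢ t)`, where `aᵢ = αᵢ X⁻¹`, `bᵢ = αᵢ X` and `αᵢ = (-1)^i p^{-i}`. The substitution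
`X ↦ -X⁻¹` exchanges `A` and `B'` and turns `B` into `A' = ∏ (1 - aᵢ t)`, so the functional
equation becomes `N·A' = N'·B` for a polynomial `N'`. Since `X²` is not constant, `bᵢ ≠ -aⱼ`,
so `B` and `A'` are coprime and `B ∣ N`; as `deg N ≤ m = deg B`, `N` is a constant multiple of
`B`. -/

open Finset
open scoped Polynomial

namespace RatFunc

variable {K : Type*} [Field K]

theorem mem_of_forall_C_mem_of_X_mem (S : Subfield (RatFunc K)) (hC : ∀ a, C a ∈ S)
    (hX : X ∈ S) (f : RatFunc K) : f ∈ S := by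
  have hpoly (P : K[X]) : algebraMap K[X] (RatFunc K) P ∈ S := by
    induction P using Polynomial.induction_on' with
    | add P Q hP hQ => rw [map_add]; exact S.add_mem hP hQ
    | monomial n a =>
      rw [← Polynomial.C_mul_X_pow_eq_monomial, map_mul, map_pow, algebraMap_C, algebraMap_X]
      exact S.mul_mem (hC a) (S.pow_mem hX n)
  rw [← num_div_denom f]
  exact S.div_mem (hpoly _) (hpoly _)

theorem exists_map_C_eq (Φ : RatFunc (RatFunc K) →+* RatFunc (RatFunc K))
    (hK : ∀ a : K, Φ (C (C a)) = C (C a)) (hX : ∃ g, Φ (C X) = C g) (f : RatFunc K) :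
    ∃ g, Φ (C f) = C g := by
  let S : Subfield (RatFunc K) := (C.fieldRange).comap (Φ.comp C)
  have hS (f : RatFunc K) : f ∈ S ↔ ∃ g, Φ (C f) = C g := by
    simp only [S, Subfield.mem_comap, RingHom.mem_fieldRange, RingHom.comp_apply, eq_comm]
  refine (hS f).mp (mem_of_forall_C_mem_of_X_mem S (fun a => (hS _).mpr ⟨C a, hK a⟩) ?_ f)
  exact (hS X).mpr hX

theorem exists_map_algebraMap_eq (Φ : RatFunc K →+* RatFunc K) (hX : Φ X = X)
    (hC : ∀ a, ∃ b, Φ (C a) = C b) (P : K[X]) :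
    ∃ Q, Φ (algebraMap K[X] (RatFunc K) P) = algebraMap K[X] (RatFunc K) Q := by
  induction P using Polynomial.induction_on' with
  | add P₁ P₂ h₁ h₂ =>
    obtain ⟨Q₁, hQ₁⟩ := h₁
    obtain ⟨Q₂, hQ₂⟩ := h₂
    exact ⟨Q₁ + Q₂, by rw [map_add, map_add, hQ₁, hQ₂, map_add]⟩
  | monomial n a =>
    obtain ⟨b, hb⟩ := hC a
    refine ⟨Polynomial.C b * Polynomial.X ^ n, ?_⟩
    simp only [← Polynomial.C_mul_X_pow_eq_monomial, map_mul, map_pow, algebraMap_C,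
      algebraMap_X, hb, hX]

theorem mul_eq_mul_of_map_div_eq (Φ : RatFunc K →+* RatFunc K) {N D N' D' : K[X]}
    (hD' : D' ≠ 0) (hD : D ≠ 0)
    (hN : Φ (algebraMap K[X] (RatFunc K) N) = algebraMap K[X] (RatFunc K) N')
    (hDΦ : Φ (algebraMap K[X] (RatFunc K) D) = algebraMap K[X] (RatFunc K) D')
    (hfix : Φ (algebraMap K[X] (RatFunc K) N / algebraMap K[X] (RatFunc K) D) =
      algebraMap K[X] (RatFunc K) N / algebraMap K[X] (RatFunc K) D) :
    N * D' = N' * D := by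
  have hinj := algebraMap_injective K
  rw [map_div₀, hN, hDΦ, div_eq_div_iff ((map_ne_zero_iff _ hinj).mpr hD')
    ((map_ne_zero_iff _ hinj).mpr hD), ← map_mul, ← map_mul] at hfix
  exact (hinj hfix).symm

theorem C_mul_X_ne_neg_C_mul_X_inv {α β : K} (hα : α ≠ 0) (hβ : β ≠ 0) :
    C α * X ≠ -(C β * X⁻¹) := by
  intro h
  have hdeg := congrArg intDegree h
  rw [intDegree_neg, intDegree_mul ((map_ne_zero C).mpr hα) X_ne_zero,
    intDegree_mul ((map_ne_zero C).mpr hβ) (inv_ne_zero X_ne_zero), intDegree_inv,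
    intDegree_C, intDegree_C, intDegree_X] at hdeg
  omega

end RatFunc

namespace Polynomial

variable {K : Type*} [Field K]

theorem exists_eq_C_mul_of_dvd_of_natDegree_le {p q : K[X]} (hpq : p ∣ q)
    (hdeg : q.natDegree ≤ p.natDegree) : ∃ c, q = C c * p := by
  rcases eq_or_ne q 0 with rfl | hq
  · exact ⟨0, by simp⟩
  obtain ⟨u, hu⟩ := associated_of_dvd_of_natDegree_le hpq hq hdeg
  obtain ⟨c, -, hc⟩ := Polynomial.isUnit_iff.mp u.isUnit
  exact ⟨c, by rw [← hu, ← hc, mul_comm]⟩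

theorem exists_eq_C_mul_of_isCoprime {p q r s : K[X]} (hpr : IsCoprime p r) (h : s * p = q * r)
    (hdeg : q.natDegree ≤ p.natDegree) : ∃ c, q = C c * p :=
  exists_eq_C_mul_of_dvd_of_natDegree_le (hpr.dvd_of_dvd_mul_right (Dvd.intro_left s h)) hdeg

noncomputable def linFactor (u : K) : K[X] := 1 + C u * X

theorem linFactor_ne_zero (u : K) : linFactor u ≠ 0 := by
  intro h
  simpa [linFactor] using congrArg (coeff · 0) h

theorem natDegree_linFactor {u : K} (hu : u ≠ 0) : (linFactor u).natDegree = 1 := by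
  rw [linFactor, add_comm, ← C_1, natDegree_linear hu]

theorem isCoprime_linFactor {u v : K} (h : u ≠ v) : IsCoprime (linFactor u) (linFactor v) := by
  have huv : u - v ≠ 0 := sub_ne_zero.mpr h
  refine ⟨C ((u - v)⁻¹ * -v), C ((u - v)⁻¹ * u), ?_⟩
  calc C ((u - v)⁻¹ * -v) * linFactor u + C ((u - v)⁻¹ * u) * linFactor v
      = C ((u - v)⁻¹ * (u - v)) := by
        simp only [linFactor, C_mul, C_sub, C_neg]; ring
    _ = 1 := by rw [inv_mul_cancel₀ huv, C_1]

theorem algebraMap_linFactor (u : K) :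
    algebraMap K[X] (RatFunc K) (linFactor u) = 1 + RatFunc.C u * RatFunc.X := by
  simp [linFactor, RatFunc.algebraMap_C, RatFunc.algebraMap_X]

noncomputable def linProd (u : ℕ → K) (m : ℕ) : K[X] := ∏ i ∈ Icc 1 m, linFactor (u i)

theorem linProd_ne_zero (u : ℕ → K) (m : ℕ) : linProd u m ≠ 0 :=
  prod_ne_zero_iff.mpr fun i _ => linFactor_ne_zero (u i)

theorem natDegree_linProd {u : ℕ → K} (hu : ∀ i, u i ≠ 0) (m : ℕ) :
    (linProd u m).natDegree = m := by
  rw [linProd, natDegree_prod _ _ fun i _ => linFactor_ne_zero (u i),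
    sum_congr rfl fun i _ => natDegree_linFactor (hu i)]
  simp

theorem isCoprime_linProd {u v : ℕ → K} (h : ∀ i j, u i ≠ v j) (m : ℕ) :
    IsCoprime (linProd u m) (linProd v m) :=
  IsCoprime.prod_left fun i _ =>
    IsCoprime.prod_right fun j _ => isCoprime_linFactor (h i j)

theorem algebraMap_linProd (u : ℕ → K) (m : ℕ) :
    algebraMap K[X] (RatFunc K) (linProd u m) =
      ∏ i ∈ Icc 1 m, (1 + RatFunc.C (u i) * RatFunc.X) := by
  simp only [linProd, map_prod, algebraMap_linFactor]

theorem map_algebraMap_linProd (Φ : RatFunc K →+* RatFunc K) (hX : Φ RatFunc.X = RatFunc.X)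
    {u v : ℕ → K} (h : ∀ i, Φ (RatFunc.C (u i)) = RatFunc.C (v i)) (m : ℕ) :
    Φ (algebraMap K[X] (RatFunc K) (linProd u m)) = algebraMap K[X] (RatFunc K) (linProd v m) := by
  simp only [algebraMap_linProd, map_prod, map_add, map_one, map_mul, h, hX]

end Polynomial

open Polynomial

def alpha (p i : ℕ) : ℚ := (-1) ^ i * (p : ℚ) ^ (-(i : ℤ))

noncomputable def aCoef (p i : ℕ) : FX := RatFunc.C (alpha p i) * RatFunc.X⁻¹

noncomputable def bCoef (p i : ℕ) : FX := RatFunc.C (alpha p i) * RatFunc.X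

theorem alpha_ne_zero {p : ℕ} (hp : p ≠ 0) (i : ℕ) : alpha p i ≠ 0 :=
  mul_ne_zero (pow_ne_zero _ (by norm_num)) (zpow_ne_zero _ (Nat.cast_ne_zero.mpr hp))

theorem bCoef_ne_zero {p : ℕ} (hp : p ≠ 0) (i : ℕ) : bCoef p i ≠ 0 :=
  mul_ne_zero ((_root_.map_ne_zero RatFunc.C).mpr (alpha_ne_zero hp i)) RatFunc.X_ne_zero

theorem bCoef_ne_neg_aCoef {p : ℕ} (hp : p ≠ 0) (i j : ℕ) : bCoef p i ≠ -aCoef p j :=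
  RatFunc.C_mul_X_ne_neg_C_mul_X_inv (alpha_ne_zero hp i) (alpha_ne_zero hp j)

theorem C_C_alpha (p i : ℕ) :
    (RatFunc.C (RatFunc.C (alpha p i)) : FXt) = (-1) ^ i * (p : FXt) ^ (-(i : ℤ)) := by
  simp [alpha]

theorem algebraMap_linProd_aCoef (p m : ℕ) :
    algebraMap FX[X] FXt (linProd (aCoef p) m) =
      ∏ i ∈ Icc 1 m, (1 + (-1) ^ i * (p : FXt) ^ (-(i : ℤ)) * xVar⁻¹ * tVar) := by
  rw [algebraMap_linProd]
  refine prod_congr rfl fun i _ => ?_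
  rw [aCoef, map_mul, C_C_alpha, map_inv₀, xVar, tVar]

theorem algebraMap_linProd_neg_bCoef (p m : ℕ) :
    algebraMap FX[X] FXt (linProd (-bCoef p) m) =
      ∏ i ∈ Icc 1 m, (1 - (-1) ^ i * (p : FXt) ^ (-(i : ℤ)) * xVar * tVar) := by
  rw [algebraMap_linProd]
  refine prod_congr rfl fun i _ => ?_
  rw [Pi.neg_apply, bCoef, map_neg, map_mul, C_C_alpha, xVar, tVar]
  ring

theorem algebraMap_linProd_bCoef_mul_neg {p : ℕ} (hp : p ≠ 0) (m : ℕ) :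
    algebraMap FX[X] FXt (linProd (bCoef p) m * linProd (-bCoef p) m) =
      ∏ i ∈ Icc 1 m, (1 - (p : FXt) ^ (-(2 * (i : ℤ))) * xVar ^ 2 * tVar ^ 2) := by
  rw [linProd, linProd, ← prod_mul_distrib, map_prod]
  refine prod_congr rfl fun i _ => ?_
  have hp' : (p : FXt) ≠ 0 := Nat.cast_ne_zero.mpr hp
  rw [map_mul, algebraMap_linFactor, algebraMap_linFactor, Pi.neg_apply, bCoef, map_neg,
    map_mul, C_C_alpha, ← xVar, ← tVar, neg_mul_eq_mul_neg,
    show -(2 * (i : ℤ)) = -(i : ℤ) + -(i : ℤ) by ring, zpow_add₀ hp']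
  have hsign : ((-1 : FXt) ^ i) ^ 2 = 1 := by rw [← pow_mul, pow_mul', neg_one_sq, one_pow]
  linear_combination (-((p : FXt) ^ (-(i : ℤ))) ^ 2 * xVar ^ 2 * tVar ^ 2) * hsign

theorem map_C_aCoef (Φ : FXt →+* FXt) (hΦX : Φ xVar = -xVar⁻¹)
    (hΦc : ∀ q : ℚ, Φ (RatFunc.C (RatFunc.C q)) = RatFunc.C (RatFunc.C q)) (p i : ℕ) :
    Φ (RatFunc.C (aCoef p i)) = RatFunc.C ((-bCoef p) i) := by
  rw [xVar] at hΦX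
  simp only [Pi.neg_apply, aCoef, bCoef, map_mul, map_inv₀, map_neg, hΦc, hΦX]
  field_simp

theorem map_C_bCoef (Φ : FXt →+* FXt) (hΦX : Φ xVar = -xVar⁻¹)
    (hΦc : ∀ q : ℚ, Φ (RatFunc.C (RatFunc.C q)) = RatFunc.C (RatFunc.C q)) (p i : ℕ) :
    Φ (RatFunc.C (bCoef p i)) = RatFunc.C ((-aCoef p) i) := by
  rw [xVar] at hΦX
  simp only [Pi.neg_apply, aCoef, bCoef, map_mul, map_inv₀, map_neg, hΦc, hΦX, mul_neg]

theorem map_C_neg_bCoef (Φ : FXt →+* FXt) (hΦX : Φ xVar = -xVar⁻¹)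
    (hΦc : ∀ q : ℚ, Φ (RatFunc.C (RatFunc.C q)) = RatFunc.C (RatFunc.C q)) (p i : ℕ) :
    Φ (RatFunc.C ((-bCoef p) i)) = RatFunc.C (aCoef p i) := by
  rw [Pi.neg_apply, map_neg, map_neg, map_C_bCoef Φ hΦX hΦc, Pi.neg_apply, map_neg, neg_neg]

theorem map_algebraMap_denominator (Φ : FXt →+* FXt) (hΦt : Φ tVar = tVar)
    (hΦX : Φ xVar = -xVar⁻¹)
    (hΦc : ∀ q : ℚ, Φ (RatFunc.C (RatFunc.C q)) = RatFunc.C (RatFunc.C q)) (p m : ℕ) :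
    Φ (algebraMap FX[X] FXt
        (linProd (aCoef p) m * (linProd (bCoef p) m * linProd (-bCoef p) m))) =
      algebraMap FX[X] FXt
        (linProd (-bCoef p) m * (linProd (-aCoef p) m * linProd (aCoef p) m)) := by
  simp only [map_mul, map_algebraMap_linProd Φ hΦt (map_C_aCoef Φ hΦX hΦc p),
    map_algebraMap_linProd Φ hΦt (map_C_bCoef Φ hΦX hΦc p),
    map_algebraMap_linProd Φ hΦt (map_C_neg_bCoef Φ hΦX hΦc p)]

theorem exists_map_C_eq_C (Φ : FXt →+* FXt) (hΦX : Φ xVar = -xVar⁻¹)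
    (hΦc : ∀ q : ℚ, Φ (RatFunc.C (RatFunc.C q)) = RatFunc.C (RatFunc.C q)) (f : FX) :
    ∃ g, Φ (RatFunc.C f) = RatFunc.C g :=
  RatFunc.exists_map_C_eq Φ hΦc ⟨-RatFunc.X⁻¹, by rw [← xVar, hΦX, map_neg, map_inv₀]; rfl⟩ f

theorem stmt18_general (p : ℕ) (hp : p.Prime) (m : ℕ)
    (Φ : FXt →+* FXt)
    (hΦt : Φ tVar = tVar)
    (hΦX : Φ xVar = -xVar⁻¹)
    (hΦc : ∀ q : ℚ, Φ (RatFunc.C (RatFunc.C q)) = RatFunc.C (RatFunc.C q))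
    (N : Polynomial FX) (hdeg : N.natDegree ≤ m)
    (L : FXt)
    (hL : L = algebraMap (Polynomial FX) FXt N /
      ((∏ i ∈ Finset.Icc 1 m,
          (1 + (-1) ^ i * (p : FXt) ^ (-(i : ℤ)) * xVar⁻¹ * tVar)) *
        ∏ i ∈ Finset.Icc 1 m,
          (1 - (p : FXt) ^ (-(2 * (i : ℤ))) * xVar ^ 2 * tVar ^ 2)))
    (hfe : Φ L = L) :
    ∃ c : FX,
      L = RatFunc.C c /
        ∏ i ∈ Finset.Icc 1 m,
          ((1 + (-1) ^ i * (p : FXt) ^ (-(i : ℤ)) * xVar⁻¹ * tVar) *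
            (1 - (-1) ^ i * (p : FXt) ^ (-(i : ℤ)) * xVar * tVar)) := by
  have hp0 := hp.ne_zero
  set A := linProd (aCoef p) m
  set B := linProd (bCoef p) m
  set A' := linProd (-aCoef p) m
  set B' := linProd (-bCoef p) m
  have hA : A ≠ 0 := linProd_ne_zero _ m
  have hA' : A' ≠ 0 := linProd_ne_zero _ m
  have hB : B ≠ 0 := linProd_ne_zero _ m
  have hB' : B' ≠ 0 := linProd_ne_zero _ m
  have hL' : L = algebraMap FX[X] FXt N / algebraMap FX[X] FXt (A * (B * B')) := by
    rw [hL, map_mul, algebraMap_linProd_aCoef, algebraMap_linProd_bCoef_mul_neg hp0]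
  obtain ⟨N', hN'⟩ := RatFunc.exists_map_algebraMap_eq Φ hΦt (exists_map_C_eq_C Φ hΦX hΦc) N
  have hcross : N * (B' * (A' * A)) = N' * (A * (B * B')) :=
    RatFunc.mul_eq_mul_of_map_div_eq Φ (mul_ne_zero hB' (mul_ne_zero hA' hA))
      (mul_ne_zero hA (mul_ne_zero hB hB')) hN' (map_algebraMap_denominator Φ hΦt hΦX hΦc p m)
      (hL' ▸ hfe)
  have hNB : N' * B = N * A' :=
    mul_left_cancel₀ (mul_ne_zero hA hB') (by linear_combination -hcross)
  obtain ⟨c, rfl⟩ := exists_eq_C_mul_of_isCoprime (isCoprime_linProd (bCoef_ne_neg_aCoef hp0) m)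
    hNB (by rwa [natDegree_linProd (bCoef_ne_zero hp0)])
  have hBne : algebraMap FX[X] FXt B ≠ 0 :=
    (map_ne_zero_iff _ (RatFunc.algebraMap_injective FX)).mpr hB
  refine ⟨c, ?_⟩
  rw [hL', prod_mul_distrib, ← algebraMap_linProd_aCoef, ← algebraMap_linProd_neg_bCoef,
    map_mul, map_mul, map_mul, RatFunc.algebraMap_C, mul_comm (RatFunc.C c),
    mul_left_comm, mul_div_mul_left _ _ hBne]

/-- The rational-function argument from the proof of Theorem 4.3.1(1).  Work in the
field `ℚ(X)(t)`; let `Φ` be a field endomorphism realizing the substitution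
`X ↦ −X⁻¹` (fixing `t` and the rational constants).  If
`L = N(t)/(∏_{i=1}^m (1 + (−1)^i p^{−i} X⁻¹ t) · ∏_{i=1}^m (1 − p^{−2i} X² t²))`
with `N` a polynomial of degree ≤ m in `t`, and `Φ L = L`, then
`L = c / ∏_{i=1}^m (1 + (−1)^i p^{−i} X⁻¹ t)(1 − (−1)^i p^{−i} X t)` for a
constant `c` independent of `t`. -/
theorem stmt18 (p : ℕ) (hp : p.Prime) (m : ℕ) (hm : 1 ≤ m)
    (Φ : FXt →+* FXt)
    (hΦt : Φ tVar = tVar)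
    (hΦX : Φ xVar = -xVar⁻¹)
    (hΦc : ∀ q : ℚ, Φ (RatFunc.C (RatFunc.C q)) = RatFunc.C (RatFunc.C q))
    (N : Polynomial FX) (hdeg : N.natDegree ≤ m)
    (L : FXt)
    (hL : L = algebraMap (Polynomial FX) FXt N /
      ((∏ i ∈ Finset.Icc 1 m,
          (1 + (-1) ^ i * (p : FXt) ^ (-(i : ℤ)) * xVar⁻¹ * tVar)) *
        ∏ i ∈ Finset.Icc 1 m,
          (1 - (p : FXt) ^ (-(2 * (i : ℤ))) * xVar ^ 2 * tVar ^ 2)))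
    (hfe : Φ L = L) :
    ∃ c : FX,
      L = RatFunc.C c /
        ∏ i ∈ Finset.Icc 1 m,
          ((1 + (-1) ^ i * (p : FXt) ^ (-(i : ℤ)) * xVar⁻¹ * tVar) *
            (1 - (-1) ^ i * (p : FXt) ^ (-(i : ℤ)) * xVar * tVar)) :=
  stmt18_general p hp m Φ hΦt hΦX hΦc N hdeg L hL hfe
end
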